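/- For each m ≥ 2 and k ≥ 1 there is a satisfiable CTL formula φ_{m,k} using only the operators AX and EX, of temporal depth k and length O(k² · m · log m), such that every serial model of φ_{m,k} has at least m^k worlds. -/

import Mathlib

def Serial {W : Type} (R : W → W → Prop) : Prop := ∀ w, ∃ u, R w u

def IsPath {W : Type} (R : W → W → Prop) (π : ℕ → W) : Prop := ∀ i, R (π i) (π (i+1))

structure Kripke (W : Type) where
  R : W → W → Prop
  V : ℕ → W → Prop

inductive CTL where
  | atom : ℕ → CTL
  | neg  : CTL → CTL
  | and  : CTL → CTL → CTL
  | or   : CTL → CTL → CTL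
  | AX : CTL → CTL
  | EX : CTL → CTL
  | AF : CTL → CTL
  | EF : CTL → CTL
  | AG : CTL → CTL
  | EG : CTL → CTL
  | AU : CTL → CTL → CTL
  | EU : CTL → CTL → CTL
  | AR : CTL → CTL → CTL
  | ER : CTL → CTL → CTL
deriving DecidableEq

def sat {W : Type} (K : Kripke W) : CTL → W → Prop
  | .atom p, w => K.V p w
  | .neg φ, w => ¬ sat K φ w
  | .and φ ψ, w => sat K φ w ∧ sat K ψ w
  | .or φ ψ, w => sat K φ w ∨ sat K ψ w
  | .AX φ, w => ∀ π : ℕ → W, IsPath K.R π → π 0 = w → sat K φ (π 1)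
  | .EX φ, w => ∃ π : ℕ → W, IsPath K.R π ∧ π 0 = w ∧ sat K φ (π 1)
  | .AF φ, w => ∀ π : ℕ → W, IsPath K.R π → π 0 = w → ∃ i, sat K φ (π i)
  | .EF φ, w => ∃ π : ℕ → W, IsPath K.R π ∧ π 0 = w ∧ ∃ i, sat K φ (π i)
  | .AG φ, w => ∀ π : ℕ → W, IsPath K.R π → π 0 = w → ∀ i, sat K φ (π i)
  | .EG φ, w => ∃ π : ℕ → W, IsPath K.R π ∧ π 0 = w ∧ ∀ i, sat K φ (π i)
  | .AU φ ψ, w => ∀ π : ℕ → W, IsPath K.R π → π 0 = w →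
      ∃ i, sat K ψ (π i) ∧ ∀ j, j < i → sat K φ (π j)
  | .EU φ ψ, w => ∃ π : ℕ → W, IsPath K.R π ∧ π 0 = w ∧
      ∃ i, sat K ψ (π i) ∧ ∀ j, j < i → sat K φ (π j)
  | .AR φ ψ, w => ∀ π : ℕ → W, IsPath K.R π → π 0 = w →
      ∀ i, sat K ψ (π i) ∨ ∃ j, j < i ∧ sat K φ (π j)
  | .ER φ ψ, w => ∃ π : ℕ → W, IsPath K.R π ∧ π 0 = w ∧
      ∀ i, sat K ψ (π i) ∨ ∃ j, j < i ∧ sat K φ (π j)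

def CTL.len : CTL → ℕ
  | .atom _ => 1
  | .neg φ => φ.len + 1
  | .and φ ψ => φ.len + ψ.len + 1
  | .or φ ψ => φ.len + ψ.len + 1
  | .AX φ => φ.len + 1
  | .EX φ => φ.len + 1
  | .AF φ => φ.len + 1
  | .EF φ => φ.len + 1
  | .AG φ => φ.len + 1
  | .EG φ => φ.len + 1
  | .AU φ ψ => φ.len + ψ.len + 1
  | .EU φ ψ => φ.len + ψ.len + 1
  | .AR φ ψ => φ.len + ψ.len + 1
  | .ER φ ψ => φ.len + ψ.len + 1

def CTL.td : CTL → ℕ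
  | .atom _ => 0
  | .neg φ => φ.td
  | .and φ ψ => max φ.td ψ.td
  | .or φ ψ => max φ.td ψ.td
  | .AX φ => φ.td + 1
  | .EX φ => φ.td + 1
  | .AF φ => φ.td + 1
  | .EF φ => φ.td + 1
  | .AG φ => φ.td + 1
  | .EG φ => φ.td + 1
  | .AU φ ψ => max φ.td ψ.td + 1
  | .EU φ ψ => max φ.td ψ.td + 1
  | .AR φ ψ => max φ.td ψ.td + 1
  | .ER φ ψ => max φ.td ψ.td + 1

/-- The formula uses only the temporal operators `AX` and its dual `EX`. -/
def OnlyAX : CTL → Prop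
  | .atom _ => True
  | .neg φ => OnlyAX φ
  | .and φ ψ => OnlyAX φ ∧ OnlyAX ψ
  | .or φ ψ => OnlyAX φ ∧ OnlyAX ψ
  | .AX φ => OnlyAX φ
  | .EX φ => OnlyAX φ
  | _ => False

/-!
Below the root, `φ_{m,k}` forces `m` successors carrying the `m` different binary codes of
block `0`; the persistence clauses of the next layer keep block `0` fixed along every
further step, while that layer again forces `m` successors with different codes of block `1`,
and so on. Hence every tuple `(a₀, …, a_{k-1}) ∈ mᵏ` is written in blocks `0, …, k-1` of some
world, and distinct tuples need distinct worlds. Conversely, the worlds `(d, f)` with a depth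
`d` and a valuation `f`, where a step increases the depth and may only rewrite the blocks
from `d` on, form a serial model of `φ_{m,k}`.
-/

theorem Serial.exists_isPath {W : Type} {R : W → W → Prop} (hS : Serial R) {w u : W}
    (h : R w u) : ∃ π : ℕ → W, IsPath R π ∧ π 0 = w ∧ π 1 = u := by
  choose next hnext using hS
  refine ⟨fun | 0 => w | n + 1 => next^[n] u, ?_, rfl, rfl⟩
  rintro (_ | n)
  · exact h
  · simpa only [Function.iterate_succ_apply'] using hnext _

namespace Kripke

variable {W : Type} (K : Kripke W)

def Encodes (L s v : ℕ) (u : W) : Prop :=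
  ∀ t < L, (K.V (s * L + t) u ↔ v.testBit t = true)

variable {K}

theorem Encodes.congr {L s v : ℕ} {u u' : W}
    (h : ∀ p < (s + 1) * L, (K.V p u ↔ K.V p u')) :
    K.Encodes L s v u ↔ K.Encodes L s v u' := by
  refine forall₂_congr fun t ht => ?_
  rw [h _ (by rw [add_mul, one_mul]; omega)]

theorem Encodes.unique {L s v v' : ℕ} {u : W} (hv : v < 2 ^ L) (hv' : v' < 2 ^ L)
    (h : K.Encodes L s v u) (h' : K.Encodes L s v' u) : v = v' := by
  refine Nat.eq_of_testBit_eq fun t => ?_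
  by_cases ht : t < L
  · exact Bool.eq_iff_iff.mpr ((h t ht).symm.trans (h' t ht))
  · have hL : 2 ^ L ≤ 2 ^ t := Nat.pow_le_pow_right two_pos (not_lt.mp ht)
    rw [Nat.testBit_lt_two_pow (hv.trans_le hL), Nat.testBit_lt_two_pow (hv'.trans_le hL)]

end Kripke

namespace CTL

def top : CTL := .or (.atom 0) (.neg (.atom 0))

def bigAnd : ℕ → (ℕ → CTL) → CTL
  | 0, _ => top
  | n + 1, f => .and (f n) (bigAnd n f)

def lit (p : ℕ) (b : Bool) : CTL := if b then .atom p else .neg (.atom p)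

/-- The paper's `c⃗ₛ(v)`. -/
def blockCode (L s v : ℕ) : CTL := bigAnd L fun t => lit (s * L + t) (v.testBit t)

def persist (p : ℕ) : CTL :=
  .and (.or (.neg (.atom p)) (.AX (.atom p)))
    (.or (.neg (.neg (.atom p))) (.AX (.neg (.atom p))))

/-- The paper's `ψ_{j+1}^m`. -/
def psi (L m j : ℕ) : CTL :=
  .and (bigAnd m fun v => .EX (blockCode L j v)) (bigAnd (j * L) persist)

def axNest (f : ℕ → CTL) : ℕ → ℕ → CTL
  | _, 0 => top
  | j, r + 1 => .and (f j) (.AX (axNest f (j + 1) r))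

/-- The paper's `φ_{m,k}`, with blocks of `⌊log₂ m⌋ + 1` bits, enough to write every `v < m`. -/
def phi (m k : ℕ) : CTL := axNest (psi (Nat.log 2 m + 1) m) 0 k

theorem onlyAX_bigAnd {n : ℕ} {f : ℕ → CTL} (h : ∀ i < n, OnlyAX (f i)) :
    OnlyAX (bigAnd n f) := by
  induction n with
  | zero => exact ⟨trivial, trivial⟩
  | succ n ih => exact ⟨h n n.lt_succ_self, ih fun i hi => h i (hi.trans n.lt_succ_self)⟩

theorem onlyAX_axNest {f : ℕ → CTL} (h : ∀ i, OnlyAX (f i)) (j r : ℕ) :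
    OnlyAX (axNest f j r) := by
  induction r generalizing j with
  | zero => exact ⟨trivial, trivial⟩
  | succ r ih => exact ⟨h j, ih (j + 1)⟩

theorem onlyAX_psi (L m j : ℕ) : OnlyAX (psi L m j) := by
  refine ⟨onlyAX_bigAnd fun v _ => onlyAX_bigAnd fun t _ => ?_, onlyAX_bigAnd fun p _ => ?_⟩
  · unfold lit; split <;> trivial
  · exact ⟨⟨trivial, trivial⟩, trivial, trivial⟩

theorem onlyAX_phi (m k : ℕ) : OnlyAX (phi m k) :=
  onlyAX_axNest (onlyAX_psi _ m) 0 k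

theorem td_bigAnd_le {n d : ℕ} {f : ℕ → CTL} (h : ∀ i < n, (f i).td ≤ d) :
    (bigAnd n f).td ≤ d := by
  induction n with
  | zero => exact Nat.zero_le d
  | succ n ih =>
    exact max_le (h n n.lt_succ_self) (ih fun i hi => h i (hi.trans n.lt_succ_self))

theorem td_axNest {f : ℕ → CTL} (h : ∀ i, (f i).td ≤ 1) (j r : ℕ) :
    (axNest f j r).td = r := by
  induction r generalizing j with
  | zero => rfl
  | succ r ih =>
    change max (f j).td ((axNest f (j + 1) r).td + 1) = r + 1
    rw [ih, max_eq_right (by have := h j; omega)]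

theorem td_psi_le (L m j : ℕ) : (psi L m j).td ≤ 1 := by
  refine max_le (td_bigAnd_le fun v _ => ?_) (td_bigAnd_le (d := 1) fun p _ => le_rfl)
  refine Nat.succ_le_succ (td_bigAnd_le (d := 0) fun t _ => ?_)
  unfold lit; split <;> rfl

theorem td_phi (m k : ℕ) : (phi m k).td = k :=
  td_axNest (td_psi_le _ m) 0 k

theorem len_bigAnd_le {n B : ℕ} {f : ℕ → CTL} (h : ∀ i < n, (f i).len ≤ B) :
    (bigAnd n f).len ≤ n * (B + 1) + 4 := by
  induction n with
  | zero => simp [bigAnd, top, len]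
  | succ n ih =>
    have := h n n.lt_succ_self
    have := ih fun i hi => h i (hi.trans n.lt_succ_self)
    change (f n).len + (bigAnd n f).len + 1 ≤ _
    rw [add_one_mul]
    omega

theorem len_axNest_le {f : ℕ → CTL} {j r B : ℕ} (h : ∀ s < r, (f (j + s)).len ≤ B) :
    (axNest f j r).len ≤ r * (B + 2) + 4 := by
  induction r generalizing j with
  | zero => simp [axNest, top, len]
  | succ r ih =>
    have := h 0 r.succ_pos
    rw [add_zero] at this
    have := ih fun s hs => (j.add_right_comm 1 s).symm ▸ h (s + 1) (Nat.succ_lt_succ hs)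
    change (f j).len + ((axNest f (j + 1) r).len + 1) + 1 ≤ _
    rw [add_one_mul]
    omega

theorem len_psi_le (L m j : ℕ) : (psi L m j).len ≤ m * (3 * L + 6) + j * L * 14 + 9 := by
  have hcode : ∀ v, (blockCode L j v).len ≤ 3 * L + 4 := fun v =>
    (len_bigAnd_le (f := fun t => lit (j * L + t) (v.testBit t)) (B := 2) fun t _ => by
      unfold lit; split <;> simp [len]).trans (by omega)
  have hex : (bigAnd m fun v => .EX (blockCode L j v)).len ≤ m * (3 * L + 6) + 4 :=
    len_bigAnd_le fun v _ => Nat.succ_le_succ (hcode v)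
  have hpersist := len_bigAnd_le (n := j * L) (f := persist) (B := 13) fun p _ => le_rfl
  change _ + _ + 1 ≤ _
  omega

theorem len_phi_le {m k : ℕ} (hm : 2 ≤ m) (hk : 1 ≤ k) :
    (phi m k).len ≤ 31 * k ^ 2 * m * (Nat.log 2 m + 1) := by
  set L := Nat.log 2 m + 1
  have hlen : (phi m k).len ≤ k * (m * (3 * L + 6) + k * L * 14 + 9 + 2) + 4 :=
    len_axNest_le fun s hs => (len_psi_le L m (0 + s)).trans (by gcongr; omega)
  have hL : 1 ≤ L := Nat.le_add_left 1 _
  have hk2 : k ≤ k * k := Nat.le_mul_self k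
  have hmL : m ≤ m * L := Nat.le_mul_of_pos_right m hL
  have h1 : 1 ≤ k * k * (m * L) := Nat.one_le_iff_ne_zero.mpr (by positivity)
  refine hlen.trans ?_
  nlinarith [Nat.mul_le_mul hk2 hmL, Nat.mul_le_mul hk2 (le_refl (m * L)),
    Nat.mul_le_mul (le_refl (k * k)) (Nat.mul_le_mul_right L hm)]

section Semantics

variable {W : Type} {K : Kripke W}

theorem sat_AX_iff (hS : Serial K.R) {φ : CTL} {w : W} :
    sat K (.AX φ) w ↔ ∀ u, K.R w u → sat K φ u := by
  refine ⟨fun h u hwu => ?_, fun h π hπ h0 => h _ (h0 ▸ hπ 0)⟩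
  obtain ⟨π, hπ, h0, h1⟩ := hS.exists_isPath hwu
  exact h1 ▸ h π hπ h0

theorem sat_EX_iff (hS : Serial K.R) {φ : CTL} {w : W} :
    sat K (.EX φ) w ↔ ∃ u, K.R w u ∧ sat K φ u := by
  refine ⟨fun ⟨π, hπ, h0, h1⟩ => ⟨π 1, h0 ▸ hπ 0, h1⟩, fun ⟨u, hwu, hu⟩ => ?_⟩
  obtain ⟨π, hπ, h0, h1⟩ := hS.exists_isPath hwu
  exact ⟨π, hπ, h0, h1 ▸ hu⟩

theorem sat_top (w : W) : sat K top w := em _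

theorem sat_bigAnd {n : ℕ} {f : ℕ → CTL} {w : W} :
    sat K (bigAnd n f) w ↔ ∀ i < n, sat K (f i) w := by
  induction n with
  | zero => exact iff_of_true (sat_top w) fun i hi => absurd hi i.not_lt_zero
  | succ n ih => exact (and_comm.trans (ih.and Iff.rfl)).trans Nat.forall_lt_succ_right.symm

theorem sat_lit {p : ℕ} {b : Bool} {w : W} : sat K (lit p b) w ↔ (K.V p w ↔ b = true) := by
  cases b <;> simp [lit, sat]

theorem sat_blockCode {L s v : ℕ} {w : W} :
    sat K (blockCode L s v) w ↔ K.Encodes L s v w := by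
  simp only [blockCode, sat_bigAnd, sat_lit, Kripke.Encodes]

theorem sat_persist (hS : Serial K.R) {p : ℕ} {w : W} :
    sat K (persist p) w ↔ ∀ u, K.R w u → (K.V p u ↔ K.V p w) := by
  change (¬K.V p w ∨ sat K (.AX (.atom p)) w) ∧ (¬¬K.V p w ∨ sat K (.AX (.neg (.atom p))) w) ↔ _
  rw [sat_AX_iff hS, sat_AX_iff hS]
  simp only [sat]
  by_cases hp : K.V p w <;> simp [hp]

theorem sat_psi (hS : Serial K.R) {L m j : ℕ} {w : W} :
    sat K (psi L m j) w ↔ (∀ v < m, ∃ u, K.R w u ∧ K.Encodes L j v u) ∧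
      ∀ p < j * L, ∀ u, K.R w u → (K.V p u ↔ K.V p w) := by
  change sat K (bigAnd _ _) w ∧ sat K (bigAnd _ _) w ↔ _
  simp only [sat_bigAnd, sat_EX_iff hS, sat_blockCode, sat_persist hS]

theorem sat_axNest_succ (hS : Serial K.R) {f : ℕ → CTL} {j r : ℕ} {w : W} :
    sat K (axNest f j (r + 1)) w ↔
      sat K (f j) w ∧ ∀ u, K.R w u → sat K (axNest f (j + 1) r) u :=
  Iff.rfl.and (sat_AX_iff hS)

theorem exists_encodes_of_sat_axNest_psi (hS : Serial K.R) {L m : ℕ} :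
    ∀ {j r : ℕ} {w : W}, sat K (axNest (psi L m) j r) w → ∀ a : Fin r → Fin m,
      ∃ u, (∀ s : Fin r, K.Encodes L (j + s) (a s) u) ∧ ∀ p < j * L, (K.V p u ↔ K.V p w)
  | _, 0, w, _, _ => ⟨w, fun s => s.elim0, fun _ _ => Iff.rfl⟩
  | j, r + 1, w, h, a => by
    obtain ⟨⟨hsucc, hpersist⟩, hnext⟩ := (sat_axNest_succ hS).mp h |>.imp_left (sat_psi hS).mp
    obtain ⟨u₁, hwu₁, hcode⟩ := hsucc (a 0) (a 0).isLt
    obtain ⟨u, hu, hagree⟩ :=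
      exists_encodes_of_sat_axNest_psi hS (hnext u₁ hwu₁) (Fin.tail a)
    refine ⟨u, Fin.cases ?head fun s => ?tail, fun p hp => ?agree⟩
    case head => simpa using (Kripke.Encodes.congr hagree).mpr hcode
    case tail => simpa [Fin.tail, add_assoc, add_comm 1] using hu s
    case agree =>
      exact (hagree p (hp.trans_le (Nat.mul_le_mul_right L j.le_succ))).trans
        (hpersist p hp u₁ hwu₁)

theorem pow_le_card_of_sat_phi [Fintype W] (hS : Serial K.R) {m k : ℕ} {w : W}
    (h : sat K (phi m k) w) : m ^ k ≤ Fintype.card W := by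
  have hm : m < 2 ^ (Nat.log 2 m + 1) := Nat.lt_pow_succ_log_self one_lt_two m
  choose F hF _ using exists_encodes_of_sat_axNest_psi hS h
  have hinj : F.Injective := fun a b hab => funext fun s => Fin.ext <|
    Kripke.Encodes.unique ((a s).isLt.trans hm) ((b s).isLt.trans hm) (hF a s) (hab ▸ hF b s)
  simpa using Fintype.card_le_of_injective F hinj

end Semantics

def layeredModel (L : ℕ) : Kripke (ℕ × (ℕ → Bool)) where
  R w u := u.1 = w.1 + 1 ∧ ∀ p < w.1 * L, u.2 p = w.2 p
  V p w := w.2 p = true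

theorem serial_layeredModel (L : ℕ) : Serial (layeredModel L).R :=
  fun w => ⟨(w.1 + 1, w.2), rfl, fun _ _ => rfl⟩

theorem sat_psi_layeredModel {L m j : ℕ} (f : ℕ → Bool) :
    sat (layeredModel L) (psi L m j) (j, f) := by
  refine (sat_psi (serial_layeredModel L)).mpr ⟨fun v _ => ?_, fun p hp u hu => ?_⟩
  · refine ⟨(j + 1, fun p => if p < j * L then f p else v.testBit (p - j * L)),
      ⟨rfl, fun p hp => if_pos hp⟩, fun t _ => ?_⟩
    simp [layeredModel]
  · change u.2 p = true ↔ f p = true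
    rw [hu.2 p hp]

theorem sat_axNest_psi_layeredModel {L m : ℕ} (r : ℕ) :
    ∀ j (f : ℕ → Bool), sat (layeredModel L) (axNest (psi L m) j r) (j, f) := by
  induction r with
  | zero => exact fun _ _ => sat_top _
  | succ r ih =>
    refine fun j f => (sat_axNest_succ (serial_layeredModel L)).mpr
      ⟨sat_psi_layeredModel f, fun ⟨d, g⟩ ⟨hd, _⟩ => ?_⟩
    obtain rfl : d = j + 1 := hd
    exact ih (j + 1) g

end CTL

/-- For each `m ≥ 2` and `k ≥ 1` there is a satisfiable CTL formula using only the
operators `AX` and `EX`, of temporal depth `k` and length `O(k² · m · log m)`, such that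
every rooted serial model has at least `m^k` worlds. -/
theorem AX_nested_model_lower_bound :
    ∃ C : ℕ, 0 < C ∧ ∀ m k : ℕ, 2 ≤ m → 1 ≤ k → ∃ φ : CTL,
      OnlyAX φ ∧ φ.td = k ∧ φ.len ≤ C * k ^ 2 * m * (Nat.log 2 m + 1) ∧
      (∃ (W : Type) (K : Kripke W) (w : W), Serial K.R ∧ sat K φ w) ∧
      (∀ (W : Type) (inst : Fintype W) (K : Kripke W) (w : W),
        Serial K.R → sat K φ w → m ^ k ≤ @Fintype.card W inst) := by
  refine ⟨31, by norm_num, fun m k hm hk => ⟨CTL.phi m k, CTL.onlyAX_phi m k, CTL.td_phi m k,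
    CTL.len_phi_le hm hk, ?_, ?_⟩⟩
  · exact ⟨_, CTL.layeredModel _, (0, fun _ => false), CTL.serial_layeredModel _,
      CTL.sat_axNest_psi_layeredModel k 0 _⟩
  · exact fun W _ K w hS h => CTL.pow_le_card_of_sat_phi hS h
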